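/- For every positive integer m, the number of index-m subgroups of ℤ × ℤ that are contained in none of Λ₁, Λ₂, Λ₃ equals σ(m) − 3σ(m/2) + 2σ(m/4) (with σ(m/2) = 0 if m is odd and σ(m/4) = 0 if 4 does not divide m). -/

import Mathlib

/-!
Every finite-index subgroup of `ℤ × ℤ` has a unique basis `(a, b), (0, d)` with `a, d > 0` and
`0 ≤ b < d` (Hermite normal form), and its index is `a * d`; so there are
`∑_{a d = m} d = σ(m)` subgroups of index `m`. Such a subgroup lies in `Λ₁`, `Λ₂` or `Λ₃` exactly
when `a` or `d` is even, i.e. exactly when its index is even. The count is therefore `σ(m)` for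
odd `m` and `0` for even `m`, and by multiplicativity of `σ` so is `σ(m) − 3σ(m/2) + 2σ(m/4)`.
-/

/-- `Λ₁ = {(x,y) ∈ ℤ × ℤ : y is even}`. -/
def Lambda1 : AddSubgroup (ℤ × ℤ) where
  carrier := {p : ℤ × ℤ | 2 ∣ p.2}
  zero_mem' := dvd_zero 2
  add_mem' := fun ha hb => dvd_add ha hb
  neg_mem' := fun ha => dvd_neg.mpr ha

/-- `Λ₂ = {(x,y) ∈ ℤ × ℤ : x is even}`. -/
def Lambda2 : AddSubgroup (ℤ × ℤ) where
  carrier := {p : ℤ × ℤ | 2 ∣ p.1}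
  zero_mem' := dvd_zero 2
  add_mem' := fun ha hb => dvd_add ha hb
  neg_mem' := fun ha => dvd_neg.mpr ha

/-- `Λ₃ = {(x,y) ∈ ℤ × ℤ : x ≡ y (mod 2)}`. -/
def Lambda3 : AddSubgroup (ℤ × ℤ) where
  carrier := {p : ℤ × ℤ | p.1 ≡ p.2 [ZMOD 2]}
  zero_mem' := Int.ModEq.refl 0
  add_mem' := fun ha hb => Int.ModEq.add ha hb
  neg_mem' := fun ha => Int.ModEq.neg ha

/-- The three index-2 subgroups, indexed by `Fin 3`. -/
def L : Fin 3 → AddSubgroup (ℤ × ℤ) := ![Lambda1, Lambda2, Lambda3]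

open Finset
open scoped ArithmeticFunction.sigma

def hermiteMap (a b d : ℕ) : ℤ × ℤ →+ ℤ × ℤ where
  toFun x := (x.1 * a, x.1 * b + x.2 * d)
  map_zero' := by simp
  map_add' x y := by ext <;> simp <;> ring

def hermiteSubgroup (a b d : ℕ) : AddSubgroup (ℤ × ℤ) := (hermiteMap a b d).range

section HermiteSubgroup

variable {a b d : ℕ}

lemma hermiteMap_apply (x : ℤ × ℤ) :
    hermiteMap a b d x = x.1 • ((a : ℤ), (b : ℤ)) + x.2 • ((0 : ℤ), (d : ℤ)) := by
  ext <;> simp [hermiteMap]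

lemma hermiteSubgroup_le_iff {H : AddSubgroup (ℤ × ℤ)} :
    hermiteSubgroup a b d ≤ H ↔ ((a : ℤ), (b : ℤ)) ∈ H ∧ ((0 : ℤ), (d : ℤ)) ∈ H := by
  constructor
  · intro h
    exact ⟨h ⟨(1, 0), by simp [hermiteMap]⟩, h ⟨(0, 1), by simp [hermiteMap]⟩⟩
  · rintro ⟨hab, hd⟩ _ ⟨x, rfl⟩
    rw [hermiteMap_apply]
    exact add_mem (zsmul_mem hab _) (zsmul_mem hd _)

lemma mem_hermiteSubgroup_iff (ha : a ≠ 0) {p : ℤ × ℤ} :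
    p ∈ hermiteSubgroup a b d ↔ (a : ℤ) ∣ p.1 ∧ (d : ℤ) ∣ p.2 - p.1 / a * b := by
  have ha' : (a : ℤ) ≠ 0 := by exact_mod_cast ha
  constructor
  · rintro ⟨⟨s, t⟩, rfl⟩
    simp only [hermiteMap, AddMonoidHom.coe_mk, ZeroHom.coe_mk, Int.mul_ediv_cancel _ ha']
    exact ⟨dvd_mul_left _ _, t, by ring⟩
  · rintro ⟨⟨s, hs⟩, t, ht⟩
    refine ⟨(s, t), Prod.ext (by simp [hermiteMap, hs, mul_comm]) ?_⟩
    simp only [hermiteMap, AddMonoidHom.coe_mk, ZeroHom.coe_mk, hs,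
      Int.mul_ediv_cancel_left _ ha'] at ht ⊢
    linear_combination -ht

lemma hermiteMap_injective (ha : a ≠ 0) (hd : d ≠ 0) : Function.Injective (hermiteMap a b d) := by
  rintro ⟨s, t⟩ ⟨s', t'⟩ h
  simp only [hermiteMap, AddMonoidHom.coe_mk, ZeroHom.coe_mk, Prod.mk.injEq] at h
  obtain rfl : s = s' := mul_right_cancel₀ (by exact_mod_cast ha) h.1
  exact Prod.ext rfl (mul_right_cancel₀ (by exact_mod_cast hd : (d : ℤ) ≠ 0) (by linarith [h.2]))

lemma index_hermiteSubgroup (ha : a ≠ 0) (hd : d ≠ 0) : (hermiteSubgroup a b d).index = a * d := by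
  rw [hermiteSubgroup, AddSubgroup.index_eq_natAbs_det (Module.Basis.finTwoProd ℤ) _
    ((Module.Basis.finTwoProd ℤ).map
      (AddMonoidHom.ofInjective (hermiteMap_injective (b := b) ha hd)).toIntLinearEquiv),
    Module.Basis.det_apply, Matrix.det_fin_two]
  simp only [Module.Basis.toMatrix_apply, Module.Basis.map_apply, AddEquiv.coe_toIntLinearEquiv,
    AddMonoidHom.ofInjective_apply]
  simp [hermiteMap, Int.natAbs_mul]

lemma dvd_of_hermiteSubgroup_le {a' b' d' : ℕ} (ha' : a' ≠ 0)
    (h : hermiteSubgroup a b d ≤ hermiteSubgroup a' b' d') :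
    a' ∣ a ∧ d' ∣ d := by
  obtain ⟨hab, hd⟩ := hermiteSubgroup_le_iff.mp h
  rw [mem_hermiteSubgroup_iff ha'] at hab hd
  exact ⟨Int.natCast_dvd_natCast.mp hab.1, Int.natCast_dvd_natCast.mp (by simpa using hd.2)⟩

lemma hermiteSubgroup_inj {a' b' d' : ℕ} (ha : a ≠ 0) (ha' : a' ≠ 0) (hb : b < d) (hb' : b' < d')
    (h : hermiteSubgroup a b d = hermiteSubgroup a' b' d') : a = a' ∧ b = b' ∧ d = d' := by
  obtain ⟨ha'a, hd'd⟩ := dvd_of_hermiteSubgroup_le ha' h.le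
  obtain ⟨haa', hdd'⟩ := dvd_of_hermiteSubgroup_le ha h.ge
  obtain rfl := Nat.dvd_antisymm haa' ha'a
  obtain rfl := Nat.dvd_antisymm hdd' hd'd
  have hab : ((a : ℤ), (b : ℤ)) ∈ hermiteSubgroup a b' d := h ▸ (hermiteSubgroup_le_iff.mp le_rfl).1
  rw [mem_hermiteSubgroup_iff ha] at hab
  simp only [Int.ediv_self (Int.natCast_ne_zero.mpr ha), one_mul] at hab
  exact ⟨rfl, (Nat.modEq_iff_dvd.mpr hab.2).eq_of_lt_of_lt hb' hb |>.symm, rfl⟩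

end HermiteSubgroup

lemma exists_eq_zmultiples_natCast {D : AddSubgroup ℤ} {n : ℤ} (hn : n ≠ 0) (h : n ∈ D) :
    ∃ d : ℕ, d ≠ 0 ∧ D = AddSubgroup.zmultiples (d : ℤ) := by
  obtain ⟨c, rfl⟩ := Int.subgroup_cyclic D
  rw [← AddSubgroup.zmultiples_eq_closure] at h ⊢
  refine ⟨c.natAbs, ?_, (Int.zmultiples_natAbs c).symm⟩
  rintro hc
  rw [Int.natAbs_eq_zero.mp hc, Int.mem_zmultiples_iff, zero_dvd_iff] at h
  exact hn h

theorem exists_eq_hermiteSubgroup {Λ : AddSubgroup (ℤ × ℤ)} (hΛ : Λ.index ≠ 0) :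
    ∃ a b d : ℕ, a ≠ 0 ∧ b < d ∧ Λ = hermiteSubgroup a b d := by
  -- `d` generates `Λ ∩ (0 × ℤ)` and `a` the first projection of `Λ`; both are nonzero subgroups
  -- because `Λ.index • p ∈ Λ` for every `p`.
  have hn : (Λ.index : ℤ) ≠ 0 := by exact_mod_cast hΛ
  obtain ⟨d, hd, hD⟩ := exists_eq_zmultiples_natCast hn
    (show (Λ.index : ℤ) ∈ Λ.comap (AddMonoidHom.inr ℤ ℤ) by simpa using Λ.nsmul_index_mem (0, 1))
  obtain ⟨a, ha, hP⟩ := exists_eq_zmultiples_natCast hn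
    (show (Λ.index : ℤ) ∈ Λ.map (AddMonoidHom.fst ℤ ℤ) from ⟨_, Λ.nsmul_index_mem (1, 0), by simp⟩)
  have mem_inr (y : ℤ) : ((0 : ℤ), y) ∈ Λ ↔ (d : ℤ) ∣ y := by
    rw [← Int.mem_zmultiples_iff, ← hD]; rfl
  have mem_fst (x : ℤ) : (∃ y, (x, y) ∈ Λ) ↔ (a : ℤ) ∣ x := by
    rw [← Int.mem_zmultiples_iff, ← hP]
    simp
  obtain ⟨y, hy⟩ := (mem_fst a).mpr dvd_rfl
  have hd' : (0 : ℤ) < d := by positivity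
  set b := (y % d).toNat
  have hb : (b : ℤ) = y % d := Int.toNat_of_nonneg (Int.emod_nonneg _ hd'.ne')
  have hab : ((a : ℤ), (b : ℤ)) ∈ Λ := by
    have : ((a : ℤ), (b : ℤ)) = ((a : ℤ), y) - (y / d) • ((0 : ℤ), (d : ℤ)) := by
      ext <;> simp [hb, Int.emod_def, mul_comm]
    rw [this]
    exact sub_mem hy (zsmul_mem ((mem_inr _).mpr dvd_rfl) _)
  refine ⟨a, b, d, ha, by have := Int.emod_lt_of_pos y hd'; omega,
    le_antisymm ?_ (hermiteSubgroup_le_iff.mpr ⟨hab, (mem_inr _).mpr dvd_rfl⟩)⟩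
  intro p hp
  obtain ⟨s, hs⟩ := (mem_fst p.1).mp ⟨p.2, hp⟩
  rw [mem_hermiteSubgroup_iff ha]
  refine ⟨⟨s, hs⟩, (mem_inr _).mp ?_⟩
  have : ((0 : ℤ), p.2 - p.1 / a * b) = p - (p.1 / a) • ((a : ℤ), (b : ℤ)) := by
    ext <;> simp [hs, ha, mul_comm]
  rw [this]
  exact sub_mem hp (zsmul_mem hab _)

theorem forall_not_le_L_iff_not_two_dvd_index {Λ : AddSubgroup (ℤ × ℤ)} (hΛ : Λ.index ≠ 0) :
    (∀ i, ¬ Λ ≤ L i) ↔ ¬ 2 ∣ Λ.index := by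
  obtain ⟨a, b, d, ha, hbd, rfl⟩ := exists_eq_hermiteSubgroup hΛ
  rw [index_hermiteSubgroup ha (by omega), Nat.Prime.dvd_mul Nat.prime_two]
  simp [Fin.forall_fin_succ, L, hermiteSubgroup_le_iff, Lambda1, Lambda2, Lambda3, Int.ModEq]
  omega

def hermiteParams (m : ℕ) : Finset (Σ _ : ℕ × ℕ, ℕ) :=
  m.divisorsAntidiagonal.sigma fun p => range p.2

lemma card_hermiteParams (m : ℕ) : #(hermiteParams m) = σ 1 m := by
  rw [hermiteParams, card_sigma, ArithmeticFunction.sigma_one_apply]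
  simp only [card_range]
  exact Nat.sum_divisorsAntidiagonal' fun _ d => d

lemma setOf_index_eq_image_hermiteParams {m : ℕ} (hm : m ≠ 0) :
    {Λ : AddSubgroup (ℤ × ℤ) | Λ.index = m}
      = (fun x => hermiteSubgroup x.1.1 x.2 x.1.2) '' (hermiteParams m : Set (Σ _ : ℕ × ℕ, ℕ)) := by
  ext Λ
  simp only [Set.mem_ofPred_eq, Set.mem_image, mem_coe, hermiteParams, mem_sigma,
    Nat.mem_divisorsAntidiagonal, mem_range]
  constructor
  · rintro rfl
    obtain ⟨a, b, d, ha, hbd, rfl⟩ := exists_eq_hermiteSubgroup hm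
    have hd : d ≠ 0 := by omega
    exact ⟨⟨(a, d), b⟩, ⟨⟨(index_hermiteSubgroup ha hd).symm, hm⟩, hbd⟩, rfl⟩
  · rintro ⟨⟨⟨a, d⟩, b⟩, ⟨⟨rfl, had⟩, -⟩, rfl⟩
    exact index_hermiteSubgroup (left_ne_zero_of_mul had) (right_ne_zero_of_mul had)

lemma hermiteSubgroup_injOn_hermiteParams (m : ℕ) :
    Set.InjOn (fun x => hermiteSubgroup x.1.1 x.2 x.1.2)
      (hermiteParams m : Set (Σ _ : ℕ × ℕ, ℕ)) := by
  rintro ⟨⟨a, d⟩, b⟩ hx ⟨⟨a', d'⟩, b'⟩ hx' h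
  simp only [mem_coe, hermiteParams, mem_sigma, Nat.mem_divisorsAntidiagonal, mem_range] at hx hx'
  obtain ⟨rfl, rfl, rfl⟩ := hermiteSubgroup_inj (left_ne_zero_of_mul (hx.1.1.symm ▸ hx.1.2))
    (left_ne_zero_of_mul (hx'.1.1.symm ▸ hx'.1.2)) hx.2 hx'.2 h
  rfl

theorem ncard_setOf_index_eq {m : ℕ} (hm : m ≠ 0) :
    {Λ : AddSubgroup (ℤ × ℤ) | Λ.index = m}.ncard = σ 1 m := by
  rw [setOf_index_eq_image_hermiteParams hm, (hermiteSubgroup_injOn_hermiteParams m).ncard_image,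
    Set.ncard_coe_finset, card_hermiteParams]

lemma sigma_one_two_mul_of_odd {n : ℕ} (hn : Odd n) : σ 1 (2 * n) = 3 * σ 1 n := by
  rw [ArithmeticFunction.isMultiplicative_sigma.map_mul_of_coprime (Nat.coprime_two_left.mpr hn)]
  rfl

lemma sigma_one_four_mul_add (n : ℕ) : σ 1 (4 * n) + 2 * σ 1 n = 3 * σ 1 (2 * n) := by
  rcases eq_or_ne n 0 with rfl | hn
  · simp
  obtain ⟨e, k, hk, rfl⟩ := Nat.exists_eq_two_pow_mul_odd hn
  have hσ (j : ℕ) : σ 1 (2 ^ j * k) = (∑ i ∈ range (j + 1), 2 ^ i) * σ 1 k := by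
    rw [ArithmeticFunction.isMultiplicative_sigma.map_mul_of_coprime
      ((Nat.coprime_two_left.mpr hk).pow_left j),
      ArithmeticFunction.sigma_one_apply_prime_pow Nat.prime_two]
  rw [← mul_assoc, ← mul_assoc, show 4 * 2 ^ e = 2 ^ (e + 2) by ring,
    show 2 * 2 ^ e = 2 ^ (e + 1) by ring, hσ, hσ, hσ]
  simp only [sum_range_succ, pow_succ]
  ring

lemma sigma_sub_three_sigma_half_add_two_sigma_quarter (m : ℕ) :
    (σ 1 m : ℤ) - 3 * (if 2 ∣ m then (σ 1 (m / 2) : ℤ) else 0)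
      + 2 * (if 4 ∣ m then (σ 1 (m / 4) : ℤ) else 0) = if 2 ∣ m then 0 else (σ 1 m : ℤ) := by
  rcases Nat.even_or_odd' m with ⟨n, rfl | rfl⟩
  · rcases Nat.even_or_odd' n with ⟨k, rfl | rfl⟩
    · have := sigma_one_four_mul_add k
      simp only [show 2 * (2 * k) = 4 * k by ring, dvd_mul_right, ite_true,
        show 4 * k / 2 = 2 * k by omega, show 4 * k / 4 = k by omega]
      omega
    · have := sigma_one_two_mul_of_odd (odd_two_mul_add_one k)
      simp only [dvd_mul_right, ite_true, show ¬ 4 ∣ 2 * (2 * k + 1) by omega, ite_false,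
        show 2 * (2 * k + 1) / 2 = 2 * k + 1 by omega]
      omega
  · simp only [show ¬ 2 ∣ 2 * n + 1 by omega, show ¬ 4 ∣ 2 * n + 1 by omega, ite_false]
    ring

/-- For every positive integer `m`, the number of index-`m`
subgroups of `ℤ × ℤ` contained in none of `Λ₁, Λ₂, Λ₃` equals
`σ(m) − 3σ(m/2) + 2σ(m/4)` (with the convention `σ(m/k) = 0` when `k ∤ m`). -/
theorem stmt11 (m : ℕ) (hm : 0 < m) :
    (Set.ncard {Λ : AddSubgroup (ℤ × ℤ) | Λ.index = m ∧
        ∀ i : Fin 3, ¬ Λ ≤ L i} : ℤ)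
      = (∑ a ∈ m.divisors, (a : ℤ))
        - 3 * (if 2 ∣ m then ∑ a ∈ (m / 2).divisors, (a : ℤ) else 0)
        + 2 * (if 4 ∣ m then ∑ a ∈ (m / 4).divisors, (a : ℤ) else 0) := by
  have hset : {Λ : AddSubgroup (ℤ × ℤ) | Λ.index = m ∧ ∀ i : Fin 3, ¬ Λ ≤ L i}
      = {Λ | Λ.index = m ∧ ¬ 2 ∣ m} := by
    ext Λ
    refine and_congr_right fun h => ?_
    rw [forall_not_le_L_iff_not_two_dvd_index (h ▸ hm.ne'), h]
  have hσ (n : ℕ) : ∑ a ∈ n.divisors, (a : ℤ) = σ 1 n := by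
    rw [ArithmeticFunction.sigma_one_apply, Nat.cast_sum]
  simp only [hσ]
  rw [sigma_sub_three_sigma_half_add_two_sigma_quarter, hset]
  split_ifs with h2
  · simp [h2]
  · simp [h2, ncard_setOf_index_eq hm.ne']
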